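/- arXiv:2503.05435 — 4 statements merged into one kernel-verified Lean document; each statement's English description precedes it below -/
import Mathlib

section
/- Let C be a circle with center M_C and radius R_C, and K a circle with center M_K and radius R_K, with d the distance between M_C and M_K, d ≠ R_K. Let t be a tangent line to C that intersects K in two points P1 and P2. Then the center M_D of the circumcircle of the triangle M_C P1 P2 satisfies dist(M_D, M_K) = |R_K² − d²| / (2 R_C), independent of the choice of tangent t. -/
/-!
Both `M_D` and `M_K` lie on the perpendicular bisector of `P1 P2`, so `M_K - M_D` is normal to
`t`. The difference of powers `X ↦ |X M_D|² - |X M_K|²` is affine with gradient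
`2 (M_K - M_D)`; comparing its values at `M_C` (on the circumcircle) and `P1` (on both circles)
gives `R_K² - d² = 2 ⟪M_C - P1, M_K - M_D⟫`. Only the normal component of `M_C - P1` contributes,
it has length `R_C` because `t` is tangent to `C`, and in the plane the normals to `t` form a line,
so the inner product is `± R_C · |M_D M_K|`.
-/

open EuclideanGeometry Metric Module
open scoped RealInnerProductSpace

section InnerProductSpace

variable {V : Type*} [NormedAddCommGroup V] [InnerProductSpace ℝ V]

theorem abs_real_inner_eq_norm_mul_norm_of_finrank_eq_one {S : Submodule ℝ V}
    (hS : finrank ℝ S = 1) {u v : V} (hu : u ∈ S) (hv : v ∈ S) :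
    |⟪u, v⟫| = ‖u‖ * ‖v‖ := by
  rcases eq_or_ne u 0 with rfl | hu0
  · simp
  obtain ⟨c, hc⟩ := (finrank_eq_one_iff_of_nonzero' (⟨u, hu⟩ : S)
    (by simpa using hu0)).mp hS ⟨v, hv⟩
  obtain rfl : c • u = v := congrArg Subtype.val hc
  rw [real_inner_smul_right, real_inner_self_eq_norm_sq, norm_smul, Real.norm_eq_abs, abs_mul,
    abs_sq]
  ring

end InnerProductSpace

section EuclideanSpace

variable {V P : Type*} [NormedAddCommGroup V] [InnerProductSpace ℝ V] [MetricSpace P]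
  [NormedAddTorsor V P]

theorem dist_sq_sub_dist_sq_sub_dist_sq_sub_dist_sq (x y a b : P) :
    (dist x a ^ 2 - dist x b ^ 2) - (dist y a ^ 2 - dist y b ^ 2) = 2 * ⟪x -ᵥ y, b -ᵥ a⟫ := by
  rw [dist_eq_norm_vsub V, dist_eq_norm_vsub V, dist_eq_norm_vsub' V y, dist_eq_norm_vsub' V y,
    ← vsub_sub_vsub_cancel_right x a y, ← vsub_sub_vsub_cancel_right x b y,
    ← vsub_sub_vsub_cancel_right b a y, norm_sub_sq_real, norm_sub_sq_real, inner_sub_right]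
  ring

theorem AffineSubspace.vsub_mem_direction_orthogonal_of_dist_eq {s : AffineSubspace ℝ P}
    (hs : finrank ℝ s.direction = 1) {p₁ p₂ c₁ c₂ : P} (hp₁ : p₁ ∈ s) (hp₂ : p₂ ∈ s)
    (hp : p₁ ≠ p₂) (hc₁ : dist c₁ p₁ = dist c₁ p₂) (hc₂ : dist c₂ p₁ = dist c₂ p₂) :
    c₂ -ᵥ c₁ ∈ s.directionᗮ := by
  have : FiniteDimensional ℝ s.direction := .of_finrank_eq_succ hs
  have hdir : ℝ ∙ (p₂ -ᵥ p₁) = s.direction := by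
    refine Submodule.eq_of_le_of_finrank_le ?_ ?_
    · exact (Submodule.span_singleton_le_iff_mem _ _).mpr (s.vsub_mem_direction hp₂ hp₁)
    · rw [hs, finrank_span_singleton (vsub_ne_zero.mpr hp.symm)]
  rw [← hdir, ← direction_perpBisector]
  exact AffineSubspace.vsub_mem_direction (mem_perpBisector_iff_dist_eq.mpr hc₂)
    (mem_perpBisector_iff_dist_eq.mpr hc₁)

theorem abs_inner_vsub_eq_infDist_mul_norm {s : AffineSubspace ℝ P} [Nonempty s]
    [s.direction.HasOrthogonalProjection] (hs : finrank ℝ s.directionᗮ = 1) (x : P) {p : P}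
    (hp : p ∈ s) {v : V} (hv : v ∈ s.directionᗮ) :
    |⟪x -ᵥ p, v⟫| = infDist x s * ‖v‖ := by
  set q : P := ↑(orthogonalProjection s x)
  have hfoot : ⟪q -ᵥ p, v⟫ = 0 :=
    Submodule.inner_right_of_mem_orthogonal (orthogonalProjection_vsub_mem_direction x hp) hv
  rw [← vsub_add_vsub_cancel x q p, inner_add_left, hfoot, add_zero,
    abs_real_inner_eq_norm_mul_norm_of_finrank_eq_one hs
      (vsub_orthogonalProjection_mem_direction_orthogonal s x) hv,
    ← dist_eq_norm_vsub, dist_orthogonalProjection_eq_infDist]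

end EuclideanSpace

theorem excircle_lemma_general (M_C M_K P1 P2 M_D : EuclideanSpace ℝ (Fin 2)) (R_C R_K : ℝ)
    (hRC : 0 < R_C)
    (t : AffineSubspace ℝ (EuclideanSpace ℝ (Fin 2)))
    (htline : Module.finrank ℝ t.direction = 1)
    (htan : Metric.infDist M_C (t : Set (EuclideanSpace ℝ (Fin 2))) = R_C)
    (hP1t : P1 ∈ t) (hP2t : P2 ∈ t) (hP12 : P1 ≠ P2)
    (hP1K : dist P1 M_K = R_K) (hP2K : dist P2 M_K = R_K)
    (hD1 : dist M_D M_C = dist M_D P1) (hD2 : dist M_D M_C = dist M_D P2) :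
    dist M_D M_K = |R_K ^ 2 - dist M_C M_K ^ 2| / (2 * R_C) := by
  have : Nonempty t := ⟨⟨P1, hP1t⟩⟩
  have hnormal : finrank ℝ t.directionᗮ = 1 := by
    have := t.direction.finrank_add_finrank_orthogonal
    rw [htline, finrank_euclideanSpace_fin] at this
    omega
  have hperp : M_K -ᵥ M_D ∈ t.directionᗮ :=
    t.vsub_mem_direction_orthogonal_of_dist_eq htline hP1t hP2t hP12 (hD1.symm.trans hD2)
      (by rw [dist_comm, hP1K, dist_comm, hP2K])
  have hpower : R_K ^ 2 - dist M_C M_K ^ 2 = 2 * ⟪M_C -ᵥ P1, M_K -ᵥ M_D⟫ := by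
    rw [← dist_sq_sub_dist_sq_sub_dist_sq_sub_dist_sq, dist_comm M_C M_D, hD1, dist_comm M_D P1,
      hP1K]
    ring
  have htangent := abs_inner_vsub_eq_infDist_mul_norm hnormal M_C hP1t hperp
  rw [htan, ← dist_eq_norm_vsub'] at htangent
  rw [eq_div_iff (by positivity), hpower, abs_mul, abs_two, htangent]
  ring

/-- Lemma 2 of the paper: the circumcenter `M_D` of the triangle `M_C P1 P2`,
where `P1 P2` is a chord of `K` on a tangent line `t` of `C`, lies at distance
`|R_K² - d²| / (2 R_C)` from `M_K`, independent of `t`. -/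
theorem excircle_lemma (M_C M_K P1 P2 M_D : EuclideanSpace ℝ (Fin 2)) (R_C R_K : ℝ)
    (hRC : 0 < R_C) (hRK : 0 < R_K)
    (t : AffineSubspace ℝ (EuclideanSpace ℝ (Fin 2)))
    (htline : Module.finrank ℝ t.direction = 1)
    (htan : Metric.infDist M_C (t : Set (EuclideanSpace ℝ (Fin 2))) = R_C)
    (hP1t : P1 ∈ t) (hP2t : P2 ∈ t) (hP12 : P1 ≠ P2)
    (hP1K : dist P1 M_K = R_K) (hP2K : dist P2 M_K = R_K)
    (hd : dist M_C M_K ≠ R_K)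
    (hD1 : dist M_D M_C = dist M_D P1) (hD2 : dist M_D M_C = dist M_D P2) :
    dist M_D M_K = |R_K ^ 2 - dist M_C M_K ^ 2| / (2 * R_C) :=
  excircle_lemma_general M_C M_K P1 P2 M_D R_C R_K hRC t htline htan hP1t hP2t hP12 hP1K hP2K hD1
    hD2
end

section
/- Let a triangle have circumcircle K (center M_K, radius R_K) and incircle C (center M_C, radius R_C), with d = dist(M_C, M_K). Then the three excenters of the triangle lie on a common circle E whose center M_E satisfies M_K = (M_C + M_E)/2 and whose radius is R_E = (R_K² − d²)/R_C. -/
open EuclideanGeometry Metric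

/-!
Put `M_E := 2 M_K - M_C`, the reflection of the incenter in the circumcenter. For the excenter `N`
beyond the side `AB`, the right angles at `A` and `B` put `A`, `B`, `M_C`, `N` on the circle with
diameter `M_C N` (Thales), so `N - M_E = 2 (P - M_K)`, with `P` the midpoint of `M_C N`, is
orthogonal to `AB`. Its inner product with `M_C - A` is the power `d² - R_K²` of `M_C` with respect
to the circumcircle, and in the plane this inner product is, up to sign, the length of `N - M_E`
times the distance `R_C` from `M_C` to `AB`. Hence `|N M_E| * R_C = R_K² - d²`, where
the sign comes from the incenter lying inside the triangle, hence inside the circumcircle.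
-/

namespace Affine.Simplex

variable {R V P : Type*} [Field R] [LinearOrder R] [IsStrictOrderedRing R] [AddCommGroup V]
  [Module R V] [AddTorsor V P]

theorem mem_interior_of_sSameSide {n : ℕ} [NeZero n] (s : Simplex R P n) {p : P}
    (hp : p ∈ affineSpan R (Set.range s.points))
    (hside : ∀ i, (affineSpan R (Set.range (s.faceOpposite i).points)).SSameSide p (s.points i)) :
    p ∈ s.interior := by
  obtain ⟨w, hw, rfl⟩ := eq_affineCombination_of_mem_affineSpan_of_fintype hp
  have hpos i : 0 < w i := (s.sSameSide_affineSpan_faceOpposite_point_right_iff hw).1 (hside i)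
  refine (affineCombination_mem_interior_iff hw).2 fun i => ⟨hpos i, ?_⟩
  obtain ⟨j, hji⟩ := exists_ne i
  exact hw ▸ Finset.single_lt_sum hji (Finset.mem_univ i) (Finset.mem_univ j) (hpos j)
    fun k _ _ => (hpos k).le

end Affine.Simplex

theorem Affine.Triangle.range_faceOpposite_points {k V P : Type*} [Ring k] [AddCommGroup V]
    [Module k V] [AddTorsor V P] (t : Affine.Triangle k P) (i : Fin 3) :
    Set.range (t.faceOpposite i).points = {t.points (i + 1), t.points (i + 2)} := by
  rw [Affine.Simplex.range_faceOpposite_points, ← Set.image_pair]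
  congr 1
  ext j
  fin_cases i <;> fin_cases j <;> simp

section InnerProductSpace

variable {V : Type*} [NormedAddCommGroup V] [InnerProductSpace ℝ V]

theorem inner_sub_pointReflection_eq {A K M N : V} (hN : inner ℝ (N - A) (M - A) = 0) :
    inner ℝ (M - A) (N - Equiv.pointReflection K M) = dist M K ^ 2 - dist A K ^ 2 := by
  have hsplit : N - Equiv.pointReflection K M = (N - A) + ((M - K) + (A - K)) := by
    rw [Equiv.pointReflection_apply, vsub_eq_sub, vadd_eq_add]; abel
  have hMA : M - A = (M - K) - (A - K) := by abel
  rw [hsplit, inner_add_right, real_inner_comm, hN, zero_add, hMA, dist_eq_norm, dist_eq_norm,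
    ← real_inner_self_eq_norm_sq, ← real_inner_self_eq_norm_sq]
  simp only [inner_sub_left, inner_add_right, real_inner_comm (A - K) (M - K)]
  ring

variable [Fact (Module.finrank ℝ V = 2)]

attribute [local instance] FiniteDimensional.of_fact_finrank_eq_two

theorem abs_real_inner_eq_norm_mul_norm_of_inner_eq_zero {u x y : V} (hu : u ≠ 0)
    (hx : inner ℝ u x = 0) (hy : inner ℝ u y = 0) : |inner ℝ x y| = ‖x‖ * ‖y‖ := by
  let o : Orientation ℝ V (Fin 2) := (Module.finBasisOfFinrankEq ℝ V Fact.out).orientation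
  have hxy := o.inner_mul_inner_add_areaForm_mul_areaForm u x y
  have hxx := o.inner_sq_add_areaForm_sq u x
  have hyy := o.inner_sq_add_areaForm_sq u y
  rw [hx] at hxy hxx
  rw [hy] at hxy hyy
  have hu2 : (‖u‖ ^ 2) ^ 2 ≠ 0 := by positivity
  have hsq : (‖u‖ ^ 2) ^ 2 * inner ℝ x y ^ 2 = (‖u‖ ^ 2) ^ 2 * (‖x‖ * ‖y‖) ^ 2 := by
    linear_combination (-(o.areaForm u x * o.areaForm u y) - ‖u‖ ^ 2 * inner ℝ x y) * hxy
      + ‖u‖ ^ 2 * ‖y‖ ^ 2 * hxx + o.areaForm u x ^ 2 * hyy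
  rw [← abs_of_nonneg (by positivity : 0 ≤ ‖x‖ * ‖y‖)]
  exact (sq_eq_sq_iff_abs_eq_abs _ _).1 (mul_left_cancel₀ hu2 hsq)

theorem abs_inner_sub_eq_infDist_mul_norm {A B M v : V} (hAB : A ≠ B)
    (hv : inner ℝ (B - A) v = 0) :
    |inner ℝ (M - A) v| = infDist M (affineSpan ℝ {A, B} : Set V) * ‖v‖ := by
  set L := affineSpan ℝ ({A, B} : Set V)
  set F : V := (orthogonalProjection L M : V)
  have hdir : L.direction = ℝ ∙ (B - A) := by
    rw [direction_affineSpan, vectorSpan_pair_rev, vsub_eq_sub]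
  have hFA : inner ℝ (F - A) v = 0 := by
    have hmem : F - A ∈ L.direction := AffineSubspace.vsub_mem_direction
      (orthogonalProjection_mem M) (left_mem_affineSpan_pair ℝ A B)
    obtain ⟨t, ht⟩ := Submodule.mem_span_singleton.1 (hdir ▸ hmem)
    rw [← ht, real_inner_smul_left, hv, mul_zero]
  have hMF : inner ℝ (B - A) (M - F) = 0 :=
    Submodule.inner_right_of_mem_orthogonal (hdir ▸ Submodule.mem_span_singleton_self _)
      (vsub_orthogonalProjection_mem_direction_orthogonal L M)
  have hdist : ‖M - F‖ = infDist M L := by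
    rw [← dist_eq_norm, dist_orthogonalProjection_eq_infDist]
  rw [← hdist, ← abs_real_inner_eq_norm_mul_norm_of_inner_eq_zero (sub_ne_zero.2 hAB.symm) hMF hv,
    show M - A = (M - F) + (F - A) by abel, inner_add_left, hFA, add_zero]

theorem dist_pointReflection_mul_infDist_eq {A B K M N : V} (hAB : A ≠ B)
    (hK : dist A K = dist B K) (hNA : inner ℝ (N - A) (M - A) = 0)
    (hNB : inner ℝ (N - B) (M - B) = 0) :
    dist N (Equiv.pointReflection K M) * infDist M (affineSpan ℝ {A, B} : Set V) =
      |dist M K ^ 2 - dist A K ^ 2| := by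
  have hA := inner_sub_pointReflection_eq (K := K) hNA
  have hB := inner_sub_pointReflection_eq (K := K) hNB
  have hperp : inner ℝ (B - A) (N - Equiv.pointReflection K M) = 0 := by
    rw [show B - A = (M - A) - (M - B) by abel, inner_sub_left, hA, hB, hK]
    ring
  rw [dist_eq_norm, mul_comm, ← abs_inner_sub_eq_infDist_mul_norm hAB hperp, hA]

end InnerProductSpace

theorem triangle_excenters_concyclic_general (A : Fin 3 → EuclideanSpace ℝ (Fin 2))
    (M_C M_K : EuclideanSpace ℝ (Fin 2)) (R_C R_K : ℝ)
    (N : Fin 3 → EuclideanSpace ℝ (Fin 2))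
    (hA : AffineIndependent ℝ A) (hRC : 0 < R_C)
    (hK : ∀ i, dist (A i) M_K = R_K)
    (hC : ∀ i, Metric.infDist M_C
      (affineSpan ℝ ({A i, A (i + 1)} : Set (EuclideanSpace ℝ (Fin 2))) :
        Set (EuclideanSpace ℝ (Fin 2))) = R_C)
    (hCin : ∀ i, (affineSpan ℝ ({A i, A (i + 1)} : Set (EuclideanSpace ℝ (Fin 2)))).SSameSide
      M_C (A (i + 2)))
    (hN : ∀ i, inner ℝ (N i - A i) (M_C - A i) = (0 : ℝ) ∧
      inner ℝ (N i - A (i + 1)) (M_C - A (i + 1)) = (0 : ℝ)) :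
    ∃ M_E : EuclideanSpace ℝ (Fin 2), M_K = midpoint ℝ M_C M_E ∧
      ∀ i, dist (N i) M_E = (R_K ^ 2 - dist M_C M_K ^ 2) / R_C := by
  let t : Affine.Triangle ℝ (EuclideanSpace ℝ (Fin 2)) := ⟨A, hA⟩
  have hspan : affineSpan ℝ (Set.range A) = ⊤ :=
    hA.affineSpan_eq_top_iff_card_eq_finrank_add_one.2 (by simp)
  have hinterior : M_C ∈ t.interior := by
    refine t.mem_interior_of_sSameSide (hspan ▸ AffineSubspace.mem_top ℝ _ M_C) fun j => ?_
    have hj : j + 1 + 1 = j + 2 ∧ j + 1 + 2 = j := by fin_cases j <;> decide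
    have h := hCin (j + 1)
    rwa [hj.1, hj.2, ← Affine.Triangle.range_faceOpposite_points t j] at h
  have hlt : dist M_C M_K < R_K :=
    t.dist_lt_of_mem_interior_of_strictConvexSpace hinterior fun i => (hK i).le
  have : Fact (Module.finrank ℝ (EuclideanSpace ℝ (Fin 2)) = 2) := ⟨finrank_euclideanSpace_fin⟩
  refine ⟨Equiv.pointReflection M_K M_C, (midpoint_pointReflection_right _ _).symm, fun i => ?_⟩
  have hside := dist_pointReflection_mul_infDist_eq (hA.injective.ne (by fin_cases i <;> decide))
    ((hK i).trans (hK (i + 1)).symm) (hN i).1 (hN i).2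
  rw [hC i, hK i, abs_sub_comm, abs_of_pos (by nlinarith [dist_nonneg (x := M_C) (y := M_K)])]
    at hside
  exact eq_div_of_mul_eq hRC.ne' hside

/-- The three excenters of a triangle lie on a circle `E` with center `M_E` such that the
circumcenter `M_K` is the midpoint of the incenter `M_C` and `M_E`, and whose radius is
`(R_K² - d²)/R_C`.  The excenter `N i` is characterized as the intersection of the external
bisectors at `A i` and `A (i+1)` (the external bisector at a vertex is the perpendicular
through the vertex to the internal bisector, which passes through `M_C`). -/
theorem triangle_excenters_concyclic (A : Fin 3 → EuclideanSpace ℝ (Fin 2))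
    (M_C M_K : EuclideanSpace ℝ (Fin 2)) (R_C R_K : ℝ)
    (N : Fin 3 → EuclideanSpace ℝ (Fin 2))
    (hA : AffineIndependent ℝ A) (hRC : 0 < R_C) (hRK : 0 < R_K)
    (hK : ∀ i, dist (A i) M_K = R_K)
    (hC : ∀ i, Metric.infDist M_C
      (affineSpan ℝ ({A i, A (i + 1)} : Set (EuclideanSpace ℝ (Fin 2))) :
        Set (EuclideanSpace ℝ (Fin 2))) = R_C)
    (hCin : ∀ i, (affineSpan ℝ ({A i, A (i + 1)} : Set (EuclideanSpace ℝ (Fin 2)))).SSameSide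
      M_C (A (i + 2)))
    (hN : ∀ i, inner ℝ (N i - A i) (M_C - A i) = (0 : ℝ) ∧
      inner ℝ (N i - A (i + 1)) (M_C - A (i + 1)) = (0 : ℝ)) :
    ∃ M_E : EuclideanSpace ℝ (Fin 2), M_K = midpoint ℝ M_C M_E ∧
      ∀ i, dist (N i) M_E = (R_K ^ 2 - dist M_C M_K ^ 2) / R_C :=
  triangle_excenters_concyclic_general A M_C M_K R_C R_K N hA hRC hK hC hCin hN
end

section
/- In the configuration of the previous excircle-center quadrilateral: the angle of the quadrilateral M1 M2 M3 M4 at M1 plus the angle at M3 equals π (which implies concyclicity). Precisely, with α_i the interior angles of the convex quadrilateral A1 A2 A3 A4, the angle at M1 equals (α1 + α2)/2 and the angle at M3 equals (α3 + α4)/2, and these sum to π since α1 + α2 + α3 + α4 = 2π. -/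
/-!
Each excentre `M i` is equidistant from the lines through `A i`, so it lies on the external
bisector there: `∡ C B P = ∡ P B X + π` at a vertex `B` with neighbours `X`, `C`, whence
`∠ C B P = (π - ∠ X B C) / 2`. The two excentres adjacent to `A i` therefore lie on opposite
rays of that bisector, so the angle of `M 0 M 1 M 2 M 3` at `M i` is the angle at `M i` of the
triangle `A i A (i + 1) M i`, which is `(α i + α (i + 1)) / 2` by the triangle angle sum. The
angles of a convex quadrilateral add up to `2 * π`, which gives the last claim.
-/

open EuclideanGeometry Metric Real Module

lemma Real.Angle.abs_toReal_add_of_sign_eq {θ ψ : Real.Angle} (hθ : θ.sign = (θ + ψ).sign)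
    (hψ : ψ.sign = (θ + ψ).sign) (h0 : (θ + ψ).sign ≠ 0) :
    |(θ + ψ).toReal| = |θ.toReal| + |ψ.toReal| := by
  have hθπ : θ ≠ π := fun h ↦ h0 (by rw [← hθ, h, Real.Angle.sign_coe_pi])
  have hψπ : ψ ≠ π := fun h ↦ h0 (by rw [← hψ, h, Real.Angle.sign_coe_pi])
  rw [Real.Angle.toReal_add_eq_toReal_add_toReal hθπ hψπ (.inr hθ), abs_add_eq_add_abs_iff]
  grind [Real.Angle.toReal_nonneg_iff_sign_nonneg, Real.Angle.toReal_neg_iff_sign_neg]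

namespace EuclideanGeometry

variable {V Pt : Type*} [NormedAddCommGroup V] [InnerProductSpace ℝ V] [MetricSpace Pt]
  [NormedAddTorsor V Pt] [Fact (finrank ℝ V = 2)] [Module.Oriented ℝ V (Fin 2)]

lemma oangle_sign_eq_of_sSameSide {p₁ p₂ p p' : Pt} (h : line[ℝ, p₁, p₂].SSameSide p p') :
    (∡ p₁ p₂ p).sign = (∡ p₁ p₂ p').sign := by
  rw [← oangle_swap₂₃_sign p₁ p p₂, ← oangle_swap₂₃_sign p₁ p' p₂,
    h.oangle_sign_eq (left_mem_affineSpan_pair ℝ p₁ p₂) (right_mem_affineSpan_pair ℝ p₁ p₂)]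

lemma oangle_sign_eq_of_sSameSide' {p₁ p₂ p p' : Pt} (h : line[ℝ, p₁, p₂].SSameSide p p') :
    (∡ p p₁ p₂).sign = (∡ p' p₁ p₂).sign := by
  rw [Set.pair_comm] at h
  rw [oangle_rev, Real.Angle.sign_neg, oangle_sign_eq_of_sSameSide h, ← Real.Angle.sign_neg,
    ← oangle_rev]

lemma oangle_sign_eq_neg_of_sOppSide {p₁ p₂ p p' : Pt} (h : line[ℝ, p₁, p₂].SOppSide p p') :
    (∡ p₁ p₂ p).sign = -(∡ p₁ p₂ p').sign := by
  rw [← oangle_swap₂₃_sign p₁ p p₂, ← oangle_swap₂₃_sign p₁ p' p₂,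
    h.oangle_sign_eq_neg (left_mem_affineSpan_pair ℝ p₁ p₂) (right_mem_affineSpan_pair ℝ p₁ p₂),
    neg_neg]

lemma oangle_sign_ne_zero_of_notMem {p₁ p₂ p : Pt} (h : p₁ ≠ p₂) (hp : p ∉ line[ℝ, p₁, p₂]) :
    (∡ p₁ p₂ p).sign ≠ 0 := by
  rw [Ne, oangle_sign_eq_zero_iff_collinear]
  exact fun hc ↦ hp (hc.mem_affineSpan_of_mem_of_ne (by simp) (by simp) (by simp) h)

lemma angle_add_angle_eq_of_sSameSide {p₁ p₂ p₃ p : Pt} (h₁ : line[ℝ, p₁, p₂].SSameSide p₃ p)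
    (h₃ : line[ℝ, p₂, p₃].SSameSide p p₁) : ∠ p₁ p₂ p + ∠ p p₂ p₃ = ∠ p₁ p₂ p₃ := by
  have h₁₂ : p₁ ≠ p₂ := fun h ↦ h₃.right_notMem (h ▸ left_mem_affineSpan_pair ℝ _ _)
  have h₃₂ : p₃ ≠ p₂ := fun h ↦ h₁.left_notMem (h ▸ right_mem_affineSpan_pair ℝ _ _)
  have hp₂ : p ≠ p₂ := fun h ↦ h₁.right_notMem (h ▸ right_mem_affineSpan_pair ℝ _ _)
  have hs₀ : (∡ p₁ p₂ p₃).sign ≠ 0 := oangle_sign_ne_zero_of_notMem h₁₂ h₁.left_notMem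
  have hs₁ : (∡ p₁ p₂ p).sign = (∡ p₁ p₂ p₃).sign := (oangle_sign_eq_of_sSameSide h₁).symm
  have hs₃ : (∡ p p₂ p₃).sign = (∡ p₁ p₂ p₃).sign := oangle_sign_eq_of_sSameSide' h₃
  have hadd := oangle_add h₁₂ hp₂ h₃₂
  rw [← hadd] at hs₀ hs₁ hs₃
  rw [angle_eq_abs_oangle_toReal h₁₂ hp₂, angle_eq_abs_oangle_toReal hp₂ h₃₂,
    angle_eq_abs_oangle_toReal h₁₂ h₃₂, ← hadd, Real.Angle.abs_toReal_add_of_sign_eq hs₁ hs₃ hs₀]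

theorem angle_add_angle_add_angle_add_angle_eq_two_pi {a b c d : Pt}
    (hab : line[ℝ, a, b].SSameSide c d) (hbc : line[ℝ, b, c].SSameSide d a)
    (hcd : line[ℝ, c, d].SSameSide a b) (hda : line[ℝ, d, a].SSameSide b c) :
    ∠ d a b + ∠ a b c + ∠ b c d + ∠ c d a = 2 * π := by
  have hba : b ≠ a := fun h ↦ hda.left_notMem (h ▸ right_mem_affineSpan_pair ℝ _ _)
  have hda' : d ≠ a := fun h ↦ hab.right_notMem (h ▸ left_mem_affineSpan_pair ℝ _ _)
  rw [← angle_add_angle_eq_of_sSameSide hda hab, ← angle_add_angle_eq_of_sSameSide hbc hcd]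
  have habc := angle_add_angle_add_angle_eq_pi c hba
  have hacd := angle_add_angle_add_angle_eq_pi c hda'
  linarith [angle_comm a d c, angle_comm d c a, angle_comm c a d]

lemma oangle_eq_oangle_add_pi_of_infDist_eq {X B C P : Pt}
    (hd : infDist P line[ℝ, B, X] = infDist P line[ℝ, B, C])
    (hX : line[ℝ, B, C].SOppSide P X) (hC : line[ℝ, B, X].SSameSide P C) :
    ∡ C B P = ∡ P B X + π := by
  have hBC : B ≠ C := fun h ↦ hC.right_notMem (h ▸ left_mem_affineSpan_pair ℝ _ _)
  have hBX : B ≠ X := fun h ↦ hX.right_notMem (h ▸ left_mem_affineSpan_pair ℝ _ _)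
  have h2 : (2 : ℤ) • ∡ C B P = (2 : ℤ) • ∡ P B X := by
    refine two_zsmul_oangle_eq_of_dist_orthogonalProjection_line_eq
      (affineIndependent_of_ne_of_mem_of_mem_of_notMem hBC (left_mem_affineSpan_pair ℝ _ _)
        (right_mem_affineSpan_pair ℝ _ _) hX.right_notMem) ?_
    rw [dist_orthogonalProjection_eq_infDist, dist_orthogonalProjection_eq_infDist, hd]
  have hsC : (∡ C B P).sign = -(∡ C B X).sign := by
    rw [Set.pair_comm] at hX
    exact oangle_sign_eq_neg_of_sOppSide hX
  have hsX : (∡ P B X).sign = (∡ C B X).sign := oangle_sign_eq_of_sSameSide' hC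
  refine Real.Angle.eq_add_pi_of_two_zsmul_eq_of_sign_eq_neg _ _ h2 (hsX ▸ hsC) ?_
  rw [hsX]
  exact oangle_sign_ne_zero_of_notMem hBC.symm (Set.pair_comm B C ▸ hX.right_notMem)

lemma angle_eq_pi_sub_angle_div_two_of_infDist_eq {X B C P : Pt}
    (hd : infDist P line[ℝ, B, X] = infDist P line[ℝ, B, C])
    (hX : line[ℝ, B, C].SOppSide P X) (hC : line[ℝ, B, X].SSameSide P C) :
    ∠ C B P = (π - ∠ X B C) / 2 := by
  have hCB : C ≠ B := fun h ↦ hC.right_notMem (h ▸ left_mem_affineSpan_pair ℝ _ _)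
  rw [Set.pair_comm] at hX
  rw [angle_eq_pi_sub_angle_div_two_of_oangle_eq_add_pi_of_sOppSide hCB
    (oangle_eq_oangle_add_pi_of_infDist_eq hd (Set.pair_comm B C ▸ hX) hC) hX, angle_comm]

lemma sbtw_of_infDist_eq {X B C P Q : Pt}
    (hP : infDist P line[ℝ, B, X] = infDist P line[ℝ, B, C])
    (hPX : line[ℝ, B, C].SOppSide P X) (hPC : line[ℝ, B, X].SSameSide P C)
    (hQ : infDist Q line[ℝ, B, X] = infDist Q line[ℝ, B, C])
    (hQC : line[ℝ, B, X].SOppSide Q C) (hQX : line[ℝ, B, C].SSameSide Q X) :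
    Sbtw ℝ Q B P := by
  have hCB : C ≠ B := fun h ↦ hPC.right_notMem (h ▸ left_mem_affineSpan_pair ℝ _ _)
  have hXB : X ≠ B := fun h ↦ hPX.right_notMem (h ▸ left_mem_affineSpan_pair ℝ _ _)
  have hPB : P ≠ B := fun h ↦ hPX.left_notMem (h ▸ left_mem_affineSpan_pair ℝ _ _)
  have hQB : Q ≠ B := fun h ↦ hQX.left_notMem (h ▸ left_mem_affineSpan_pair ℝ _ _)
  have hP' := oangle_eq_oangle_add_pi_of_infDist_eq hP hPX hPC
  have hQ' := oangle_eq_oangle_add_pi_of_infDist_eq hQ.symm hQC hQX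
  have h2 : (2 : ℤ) • ∡ Q B P = 0 := calc
    (2 : ℤ) • ∡ Q B P = ∡ P B X + ∡ X B Q + ∡ Q B P := by
      rw [two_zsmul, ← oangle_add hQB hCB hPB, hP', hQ']
      abel
    _ = 0 := oangle_add_cyc3 hPB hXB hQB
  rcases Real.Angle.two_zsmul_eq_zero_iff.1 h2 with h0 | hπ
  · rw [Set.pair_comm] at hPX hQX
    have hs : (∡ C B P).sign = (∡ C B Q).sign := by
      rw [← oangle_add hCB hQB hPB, h0, add_zero]
    rw [oangle_sign_eq_neg_of_sOppSide hPX, oangle_sign_eq_of_sSameSide hQX,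
      SignType.neg_eq_self_iff] at hs
    exact absurd hs (oangle_sign_ne_zero_of_notMem hCB hPX.right_notMem)
  · exact oangle_eq_pi_iff_sbtw.1 hπ

/-- `P` is the centre of the excircle beyond the side `B C` of a convex polygon whose
consecutive vertices are `X, B, C, D`. -/
structure IsSideExcenter (X B C D P : Pt) : Prop where
  infDist_left : infDist P line[ℝ, X, B] = infDist P line[ℝ, B, C]
  infDist_right : infDist P line[ℝ, C, D] = infDist P line[ℝ, B, C]
  sOppSide_left : line[ℝ, B, C].SOppSide P X
  sOppSide_right : line[ℝ, B, C].SOppSide P D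
  sSameSide_left : line[ℝ, X, B].SSameSide P C
  sSameSide_right : line[ℝ, C, D].SSameSide P B

namespace IsSideExcenter

variable {W X B C D E P Q R : Pt}

lemma angle_left (h : IsSideExcenter X B C D P) : ∠ C B P = (π - ∠ X B C) / 2 :=
  angle_eq_pi_sub_angle_div_two_of_infDist_eq (Set.pair_comm X B ▸ h.infDist_left)
    h.sOppSide_left (Set.pair_comm X B ▸ h.sSameSide_left)

lemma angle_right (h : IsSideExcenter X B C D P) : ∠ B C P = (π - ∠ B C D) / 2 := by
  rw [angle_comm B C D]
  exact angle_eq_pi_sub_angle_div_two_of_infDist_eq (Set.pair_comm B C ▸ h.infDist_right)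
    (Set.pair_comm B C ▸ h.sOppSide_right) h.sSameSide_right

lemma angle_eq (h : IsSideExcenter X B C D P) : ∠ B P C = (∠ X B C + ∠ B C D) / 2 := by
  have hCB : C ≠ B := fun hCB ↦
    h.sSameSide_left.right_notMem (hCB ▸ right_mem_affineSpan_pair ℝ _ _)
  have := angle_add_angle_add_angle_eq_pi P hCB
  linarith [h.angle_left, h.angle_right, angle_comm C P B, angle_comm P B C]

lemma sbtw (hQ : IsSideExcenter W X B C Q) (hP : IsSideExcenter X B C D P) : Sbtw ℝ Q B P :=
  sbtw_of_infDist_eq (Set.pair_comm X B ▸ hP.infDist_left) hP.sOppSide_left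
    (Set.pair_comm X B ▸ hP.sSameSide_left) (Set.pair_comm X B ▸ hQ.infDist_right.symm)
    (Set.pair_comm X B ▸ hQ.sOppSide_right) hQ.sSameSide_right

lemma angle_prev_next (hQ : IsSideExcenter W X B C Q) (hP : IsSideExcenter X B C D P)
    (hR : IsSideExcenter B C D E R) : ∠ Q P R = (∠ X B C + ∠ B C D) / 2 := by
  rw [← (hQ.sbtw hP).symm.angle_eq_left, ← (hP.sbtw hR).angle_eq_right, hP.angle_eq]

end IsSideExcenter

end EuclideanGeometry

theorem quadrilateral_excenters_opposite_angles_general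
    (A M : Fin 4 → EuclideanSpace ℝ (Fin 2)) (r : Fin 4 → ℝ)
    (hconv : ∀ i : Fin 4,
      (affineSpan ℝ ({A i, A (i + 1)} : Set (EuclideanSpace ℝ (Fin 2)))).SSameSide
        (A (i + 2)) (A (i + 3)))
    (htan : ∀ i : Fin 4,
      Metric.infDist (M i) (affineSpan ℝ ({A (i - 1), A i} : Set (EuclideanSpace ℝ (Fin 2))) :
        Set (EuclideanSpace ℝ (Fin 2))) = r i ∧
      Metric.infDist (M i) (affineSpan ℝ ({A i, A (i + 1)} : Set (EuclideanSpace ℝ (Fin 2))) :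
        Set (EuclideanSpace ℝ (Fin 2))) = r i ∧
      Metric.infDist (M i) (affineSpan ℝ ({A (i + 1), A (i + 2)} : Set (EuclideanSpace ℝ (Fin 2))) :
        Set (EuclideanSpace ℝ (Fin 2))) = r i)
    (hside : ∀ i : Fin 4,
      (affineSpan ℝ ({A i, A (i + 1)} : Set (EuclideanSpace ℝ (Fin 2)))).SOppSide
        (M i) (A (i + 2)) ∧
      (affineSpan ℝ ({A (i - 1), A i} : Set (EuclideanSpace ℝ (Fin 2)))).SSameSide
        (M i) (A (i + 1)) ∧
      (affineSpan ℝ ({A (i + 1), A (i + 2)} : Set (EuclideanSpace ℝ (Fin 2)))).SSameSide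
        (M i) (A i)) :
    ∠ (M 3) (M 0) (M 1) = (∠ (A 3) (A 0) (A 1) + ∠ (A 0) (A 1) (A 2)) / 2 ∧
    ∠ (M 1) (M 2) (M 3) = (∠ (A 1) (A 2) (A 3) + ∠ (A 2) (A 3) (A 0)) / 2 ∧
    ∠ (M 3) (M 0) (M 1) + ∠ (M 1) (M 2) (M 3) = π := by
  have : Fact (finrank ℝ (EuclideanSpace ℝ (Fin 2)) = 2) := ⟨finrank_euclideanSpace_fin⟩
  let : Module.Oriented ℝ (EuclideanSpace ℝ (Fin 2)) (Fin 2) :=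
    ⟨(EuclideanSpace.basisFun (Fin 2) ℝ).toBasis.orientation⟩
  have hE (i : Fin 4) : IsSideExcenter (A (i - 1)) (A i) (A (i + 1)) (A (i + 2)) (M i) :=
    { infDist_left := (htan i).1.trans (htan i).2.1.symm
      infDist_right := (htan i).2.2.trans (htan i).2.1.symm
      sOppSide_left := (hside i).1.trans_sSameSide ((show i + 3 = i - 1 by omega) ▸ hconv i)
      sOppSide_right := (hside i).1
      sSameSide_left := (hside i).2.1
      sSameSide_right := (hside i).2.2 }
  have hM (i : Fin 4) : ∠ (M (i - 1)) (M i) (M (i + 1)) =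
      (∠ (A (i - 1)) (A i) (A (i + 1)) + ∠ (A i) (A (i + 1)) (A (i + 2))) / 2 := by
    have hprev := hE (i - 1)
    have hnext := hE (i + 1)
    rw [sub_add_cancel, show i - 1 + 2 = i + 1 by abel] at hprev
    rw [add_sub_cancel_right, show i + 1 + 1 = i + 2 by abel] at hnext
    exact hprev.angle_prev_next (hE i) hnext
  have hsum : ∠ (A 3) (A 0) (A 1) + ∠ (A 0) (A 1) (A 2) + ∠ (A 1) (A 2) (A 3) +
      ∠ (A 2) (A 3) (A 0) = 2 * π :=
    angle_add_angle_add_angle_add_angle_eq_two_pi (hconv 0) (hconv 1) (hconv 2) (hconv 3)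
  have hM₀ : ∠ (M 3) (M 0) (M 1) = (∠ (A 3) (A 0) (A 1) + ∠ (A 0) (A 1) (A 2)) / 2 := hM 0
  have hM₂ : ∠ (M 1) (M 2) (M 3) = (∠ (A 1) (A 2) (A 3) + ∠ (A 2) (A 3) (A 0)) / 2 := hM 2
  exact ⟨hM₀, hM₂, by linarith⟩

/-- In the excircle-center quadrilateral `M1 M2 M3 M4` of a convex quadrilateral
`A1 A2 A3 A4`, the angle at `M1` is `(α1 + α2)/2`, the angle at `M3` is `(α3 + α4)/2`,
and these two angles sum to `π`. -/
theorem quadrilateral_excenters_opposite_angles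
    (A M : Fin 4 → EuclideanSpace ℝ (Fin 2)) (r : Fin 4 → ℝ)
    (hconv : ∀ i : Fin 4,
      (affineSpan ℝ ({A i, A (i + 1)} : Set (EuclideanSpace ℝ (Fin 2)))).SSameSide
        (A (i + 2)) (A (i + 3)))
    (hr : ∀ i, 0 < r i)
    (htan : ∀ i : Fin 4,
      Metric.infDist (M i) (affineSpan ℝ ({A (i - 1), A i} : Set (EuclideanSpace ℝ (Fin 2))) :
        Set (EuclideanSpace ℝ (Fin 2))) = r i ∧
      Metric.infDist (M i) (affineSpan ℝ ({A i, A (i + 1)} : Set (EuclideanSpace ℝ (Fin 2))) :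
        Set (EuclideanSpace ℝ (Fin 2))) = r i ∧
      Metric.infDist (M i) (affineSpan ℝ ({A (i + 1), A (i + 2)} : Set (EuclideanSpace ℝ (Fin 2))) :
        Set (EuclideanSpace ℝ (Fin 2))) = r i)
    (hside : ∀ i : Fin 4,
      (affineSpan ℝ ({A i, A (i + 1)} : Set (EuclideanSpace ℝ (Fin 2)))).SOppSide
        (M i) (A (i + 2)) ∧
      (affineSpan ℝ ({A (i - 1), A i} : Set (EuclideanSpace ℝ (Fin 2)))).SSameSide
        (M i) (A (i + 1)) ∧
      (affineSpan ℝ ({A (i + 1), A (i + 2)} : Set (EuclideanSpace ℝ (Fin 2)))).SSameSide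
        (M i) (A i)) :
    ∠ (M 3) (M 0) (M 1) = (∠ (A 3) (A 0) (A 1) + ∠ (A 0) (A 1) (A 2)) / 2 ∧
    ∠ (M 1) (M 2) (M 3) = (∠ (A 1) (A 2) (A 3) + ∠ (A 2) (A 3) (A 0)) / 2 ∧
    ∠ (M 3) (M 0) (M 1) + ∠ (M 1) (M 2) (M 3) = π :=
  quadrilateral_excenters_opposite_angles_general A M r hconv htan hside
end

section
/- Let A1 ... An (n ≥ 3) be a polygon inscribed in a circle K with center M_K and radius R_K and circumscribed about a circle C with center M_C and radius R_C, with d = dist(M_C, M_K) and d ≠ R_K. For each i, let N_i be the intersection of the external angle bisectors at A_i and A_{i+1} (the center of the excircle touching side a_i). Then all N_i lie on one circle E with radius R_E = |R_K² − d²| / R_C, and the center M_E of E satisfies M_K = (M_C + M_E)/2. -/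
/-!
Let `M_E` be the reflection of `M_C` in `M_K`. Since `N_i - A` is orthogonal to `M_C - A` at a
vertex `A` on `K`, expanding gives `⟪A - M_C, N_i - M_E⟫ = R_K² - d²` at both `A = A_i` and
`A = A_{i+1}`. Hence `N_i - M_E` is normal to the side line `A_i A_{i+1}`, and the point-to-line
distance formula for the tangent side line reads `|R_K² - d²| = R_C ‖N_i - M_E‖`.
-/

open EuclideanGeometry Metric Module RealInnerProductSpace

section

variable {V : Type*} [NormedAddCommGroup V] [InnerProductSpace ℝ V]

theorem inner_sub_pointReflection_of_inner_eq_zero {a c k n : V} (h : ⟪n - a, c - a⟫ = 0) :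
    ⟪a - c, n - AffineEquiv.pointReflection ℝ k c⟫ = dist a k ^ 2 - dist c k ^ 2 := by
  have h' : ⟪a - c, n - a⟫ = 0 := by
    rw [real_inner_comm, ← neg_sub c a, inner_neg_right, h, neg_zero]
  rw [AffineEquiv.pointReflection_apply, vsub_eq_sub, vadd_eq_add, dist_eq_norm, dist_eq_norm,
    show n - (k - c + k) = (n - a) + ((a - k) + (c - k)) by abel, inner_add_right, h', zero_add,
    show a - c = (a - k) - (c - k) by abel, inner_sub_left, inner_add_right, inner_add_right,
    real_inner_self_eq_norm_sq, real_inner_self_eq_norm_sq, real_inner_comm (a - k)]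
  ring

theorem abs_real_inner_eq_norm_mul_norm_of_inner_eq_zero_s16 [Fact (finrank ℝ V = 2)] {u v w : V}
    (hv : v ≠ 0) (hu : ⟪v, u⟫ = 0) (hw : ⟪v, w⟫ = 0) : |⟪u, w⟫| = ‖u‖ * ‖w‖ := by
  refine ((norm_inner_eq_norm_tfae ℝ u w).out 0 3).2 ?_
  rcases eq_or_ne u 0 with rfl | hu0
  · exact Or.inl rfl
  · exact Or.inr (Submodule.mem_span_singleton_of_inner_eq_zero_of_inner_eq_zero hv hu0 hw hu)

theorem abs_inner_sub_eq_infDist_mul_norm_s16 [Fact (finrank ℝ V = 2)] {a b c w : V} (hab : a ≠ b)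
    (hw : ⟪b - a, w⟫ = 0) : |⟪a - c, w⟫| = infDist c (line[ℝ, a, b] : Set V) * ‖w‖ := by
  set s := line[ℝ, a, b]
  have ha : a ∈ s := left_mem_affineSpan_pair ℝ a b
  have : Nonempty s := ⟨⟨a, ha⟩⟩
  set q : V := ↑(orthogonalProjection s c)
  have hba : b - a ∈ s.direction := by
    rw [direction_affineSpan]
    exact vsub_rev_mem_vectorSpan_pair ℝ a b
  have hcq : ⟪b - a, q - c⟫ = 0 := by
    have := (Submodule.mem_orthogonal _ _).1
      (vsub_orthogonalProjection_mem_direction_orthogonal s c) _ hba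
    rw [← neg_sub c q, inner_neg_right, neg_eq_zero]
    exact this
  have haq : ⟪a - q, w⟫ = 0 := by
    have : a - q ∈ s.direction := AffineSubspace.vsub_mem_direction ha (orthogonalProjection_mem c)
    rw [direction_affineSpan, vectorSpan_pair_rev] at this
    obtain ⟨r, hr⟩ := Submodule.mem_span_singleton.1 this
    rw [← hr, vsub_eq_sub, real_inner_smul_left, hw, mul_zero]
  rw [← dist_orthogonalProjection_eq_infDist, dist_comm, dist_eq_norm,
    ← abs_real_inner_eq_norm_mul_norm_of_inner_eq_zero_s16 (sub_ne_zero.2 hab.symm) hcq hw,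
    show a - c = (a - q) + (q - c) by abel, inner_add_left, haq, zero_add]

end

theorem bicentric_excenters_concyclic_general {n : ℕ} [NeZero n]
    (A N : Fin n → EuclideanSpace ℝ (Fin 2)) (M_C M_K : EuclideanSpace ℝ (Fin 2))
    (R_C R_K : ℝ) (hRC : 0 < R_C)
    (hsides : ∀ i, A i ≠ A (i + 1))
    (hK : ∀ i, dist (A i) M_K = R_K)
    (hC : ∀ i, Metric.infDist M_C
      (affineSpan ℝ ({A i, A (i + 1)} : Set (EuclideanSpace ℝ (Fin 2))) :
        Set (EuclideanSpace ℝ (Fin 2))) = R_C)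
    (hN : ∀ i, inner ℝ (N i - A i) (M_C - A i) = (0 : ℝ) ∧
      inner ℝ (N i - A (i + 1)) (M_C - A (i + 1)) = (0 : ℝ)) :
    ∃ M_E : EuclideanSpace ℝ (Fin 2), M_K = midpoint ℝ M_C M_E ∧
      ∀ i, dist (N i) M_E = |R_K ^ 2 - dist M_C M_K ^ 2| / R_C := by
  have : Fact (finrank ℝ (EuclideanSpace ℝ (Fin 2)) = 2) := ⟨finrank_euclideanSpace_fin⟩
  set M_E := AffineEquiv.pointReflection ℝ M_K M_C
  refine ⟨M_E, ((midpoint_eq_iff ..).2 rfl).symm, fun i => ?_⟩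
  have h₁ : ⟪A i - M_C, N i - M_E⟫ = R_K ^ 2 - dist M_C M_K ^ 2 := by
    rw [inner_sub_pointReflection_of_inner_eq_zero (hN i).1, hK]
  have h₂ : ⟪A (i + 1) - M_C, N i - M_E⟫ = R_K ^ 2 - dist M_C M_K ^ 2 := by
    rw [inner_sub_pointReflection_of_inner_eq_zero (hN i).2, hK]
  have hw : ⟪A (i + 1) - A i, N i - M_E⟫ = 0 := by
    rw [← sub_sub_sub_cancel_right _ _ M_C, inner_sub_left, h₁, h₂, sub_self]
  have hdist := abs_inner_sub_eq_infDist_mul_norm_s16 (c := M_C) (hsides i) hw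
  rw [h₁, hC i, ← dist_eq_norm] at hdist
  rw [hdist, mul_div_cancel_left₀ _ hRC.ne']

/-- Main theorem: the centers of the excircles of a bicentric polygon are concyclic on a
circle `E` with radius `|R_K² - d²| / R_C`, and the circumcenter `M_K` is the midpoint of
the incenter `M_C` and the center `M_E` of `E`.  The excenter `N i` is the intersection of
the external angle bisectors at `A i` and `A (i+1)`, each external bisector being the
perpendicular through the vertex to the internal bisector (which passes through `M_C`). -/
theorem bicentric_excenters_concyclic {n : ℕ} [NeZero n] (hn : 3 ≤ n)
    (A N : Fin n → EuclideanSpace ℝ (Fin 2)) (M_C M_K : EuclideanSpace ℝ (Fin 2))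
    (R_C R_K : ℝ) (hRC : 0 < R_C) (hRK : 0 < R_K)
    (hsides : ∀ i, A i ≠ A (i + 1))
    (hK : ∀ i, dist (A i) M_K = R_K)
    (hC : ∀ i, Metric.infDist M_C
      (affineSpan ℝ ({A i, A (i + 1)} : Set (EuclideanSpace ℝ (Fin 2))) :
        Set (EuclideanSpace ℝ (Fin 2))) = R_C)
    (hd : dist M_C M_K ≠ R_K)
    (hN : ∀ i, inner ℝ (N i - A i) (M_C - A i) = (0 : ℝ) ∧
      inner ℝ (N i - A (i + 1)) (M_C - A (i + 1)) = (0 : ℝ)) :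
    ∃ M_E : EuclideanSpace ℝ (Fin 2), M_K = midpoint ℝ M_C M_E ∧
      ∀ i, dist (N i) M_E = |R_K ^ 2 - dist M_C M_K ^ 2| / R_C :=
  bicentric_excenters_concyclic_general A N M_C M_K R_C R_K hRC hsides hK hC hN
end
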